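/- arXiv:2410.13188 — 2 statements merged into one kernel-verified Lean document; each statement's English description precedes it below -/
import Mathlib

section
/- Let G(t) be an invariant Ricci flow on the three-dimensional Heisenberg Lie algebra, i.e. dG/dt = −2Ric_G. Then R_G satisfies the ODE dR_G/dt = 6R_G², and consequently d/dt (t R_G) = 6 t R_G (R_G + 1/(6t)) ≤ 0, since R_G ≤ 0 and (using the explicit solution R_G(t) = −1/(6(t+C)) with C ≥ 0 when R_G(t₀) < 0 for some t₀) R_G + 1/(6t) ≥ 0. -/
open Matrix

namespace RFN

variable {n : ℕ}

/-- Bracket determined by structure constants: `[e i, e j] = ∑ k, c i j k • e k`. -/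
def bra (c : Fin n → Fin n → Fin n → ℝ) (x y : Fin n → ℝ) : Fin n → ℝ :=
  fun k => ∑ i, ∑ j, x i * y j * c i j k

/-- `c` is a family of structure constants of a Lie algebra. -/
def IsLieSC (c : Fin n → Fin n → Fin n → ℝ) : Prop :=
  (∀ i j k, c i j k = - c j i k) ∧
  ∀ x y z, bra c (bra c x y) z + bra c (bra c y z) x + bra c (bra c z x) y = 0

def adIter (c : Fin n → Fin n → Fin n → ℝ) (v : ℕ → Fin n → ℝ) :
    ℕ → (Fin n → ℝ) → (Fin n → ℝ)
  | 0, x => x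
  | m + 1, x => bra c (v m) (adIter c v m x)

/-- Nilpotency of the Lie algebra with structure constants `c`. -/
def IsNilpotentSC (c : Fin n → Fin n → Fin n → ℝ) : Prop :=
  ∃ N : ℕ, ∀ v x, adIter c v N x = 0

/-- Inner product of vectors with respect to the metric matrix `G`. -/
def gdot (G : Matrix (Fin n) (Fin n) ℝ) (x y : Fin n → ℝ) : ℝ :=
  ∑ i, ∑ j, x i * G i j * y j

/-- Components of the Ricci bilinear form of the invariant metric `G`:
`Ric_G(x,y) = -(1/2) Σ G([x,e_i],[y,e_j])G^{ij} + (1/4) Σ G^{ip}G^{jq}G([e_i,e_j],x)G([e_p,e_q],y)`. -/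
noncomputable def Ricm (c : Fin n → Fin n → Fin n → ℝ) (G : Matrix (Fin n) (Fin n) ℝ) :
    Matrix (Fin n) (Fin n) ℝ :=
  Matrix.of fun a b =>
    -(1/2) * (∑ i, ∑ j, G⁻¹ i j * gdot G (c a i) (c b j))
    + (1/4) * (∑ i, ∑ j, ∑ p, ∑ q, G⁻¹ i p * G⁻¹ j q *
        (∑ k, c i j k * G k a) * (∑ l, c p q l * G l b))

/-- Scalar curvature `R_G = -(1/4)|[·,·]|²_G`. -/
noncomputable def scalR (c : Fin n → Fin n → Fin n → ℝ) (G : Matrix (Fin n) (Fin n) ℝ) : ℝ :=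
  -(1/4) * (∑ i, ∑ j, ∑ p, ∑ q, G⁻¹ i p * G⁻¹ j q * gdot G (c i j) (c p q))

/-- Ricci endomorphism `Rc_G = G⁻¹ Ric_G`. -/
noncomputable def Rc (c : Fin n → Fin n → Fin n → ℝ) (G : Matrix (Fin n) (Fin n) ℝ) :
    Matrix (Fin n) (Fin n) ℝ := G⁻¹ * Ricm c G

/-- `δ(A)(e_i,e_j) = A[e_i,e_j] - [A e_i, e_j] - [e_i, A e_j]` (components). -/
def deltaE (c : Fin n → Fin n → Fin n → ℝ) (A : Matrix (Fin n) (Fin n) ℝ) :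
    Fin n → Fin n → Fin n → ℝ :=
  fun i j k => (∑ l, A k l * c i j l) - (∑ l, A l i * c l j k) - (∑ l, A l j * c i l k)

/-- The inner product on `Λ²𝔤*⊗𝔤` induced by `G` (full sum over ordered pairs). -/
noncomputable def tinner (G : Matrix (Fin n) (Fin n) ℝ) (μ ν : Fin n → Fin n → Fin n → ℝ) : ℝ :=
  ∑ i, ∑ j, ∑ p, ∑ q, G⁻¹ i p * G⁻¹ j q * gdot G (μ i j) (ν p q)

/-- The (Hilbert–Schmidt) inner product of endomorphisms induced by `G`. -/
noncomputable def einner (G : Matrix (Fin n) (Fin n) ℝ) (A B : Matrix (Fin n) (Fin n) ℝ) : ℝ :=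
  ∑ i, ∑ j, G⁻¹ i j * gdot G (fun k => A k i) (fun k => B k j)

/-- The inner product of bilinear forms induced by `G`. -/
noncomputable def binner (G : Matrix (Fin n) (Fin n) ℝ) (S T : Matrix (Fin n) (Fin n) ℝ) : ℝ :=
  ∑ i, ∑ j, ∑ p, ∑ q, G⁻¹ i p * G⁻¹ j q * S i j * T p q

/-- `|Ric_G|²`. -/
noncomputable def ric2 (c : Fin n → Fin n → Fin n → ℝ) (G : Matrix (Fin n) (Fin n) ℝ) : ℝ :=
  binner G (Ricm c G) (Ricm c G)

/-- The functional `W₊(G,τ) = τ R_G + τ² |Ric_G|²`. -/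
noncomputable def Wplus (c : Fin n → Fin n → Fin n → ℝ) (G : Matrix (Fin n) (Fin n) ℝ) (τ : ℝ) : ℝ :=
  τ * scalR c G + τ ^ 2 * ric2 c G

/-- Structure constants of the 3-dimensional Heisenberg Lie algebra: `[e₀,e₁] = e₂`, `e₂` central. -/
def heis : Fin 3 → Fin 3 → Fin 3 → ℝ := fun i j k =>
  if i = 0 ∧ j = 1 ∧ k = 2 then 1 else if i = 1 ∧ j = 0 ∧ k = 2 then -1 else 0

end RFN

open RFN Matrix

/-!
Only the `e₂`-component of the Heisenberg bracket is nonzero, so every curvature quantity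
reduces to a rational function of `g₂₂ = G 2 2` and `D = det G`: `R_G = -g₂₂² / (2D)` and
`Ric_G(e₂, e₂) = g₂₂³ / (2D)`. Along the flow this gives `g₂₂' = 2 R_G g₂₂`, and Jacobi's formula
together with `tr Rc_G = R_G` gives `D' = -2 R_G D`; hence `R_G' = 6 R_G²`.
Since `R_G < 0`, the function `-1 / (6 R_G)` has derivative `1` and stays positive on `(0, ∞)`,
so it is at least `t`, which is `6 t R_G + 1 ≥ 0`.
-/

lemma self_le_of_hasDerivAt_one_of_pos {h : ℝ → ℝ} (hpos : ∀ s, 0 < s → 0 < h s)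
    (hderiv : ∀ s, 0 < s → HasDerivAt h 1 s) {t : ℝ} (ht : 0 < t) : t ≤ h t := by
  obtain ⟨a, ha⟩ := isOpen_Ioi.exists_eq_add_of_deriv_eq isPreconnected_Ioi
    (fun s hs => (hderiv s hs).differentiableAt.differentiableWithinAt) differentiableOn_id
    (fun s hs => by simp [(hderiv s hs).deriv])
  have ha_nonneg : 0 ≤ a := by
    by_contra! ha_neg
    have hs : -a / 2 ∈ Set.Ioi (0 : ℝ) := by simp only [Set.mem_Ioi]; linarith
    have := hpos _ hs
    rw [ha hs] at this
    simp only [id] at this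
    linarith
  rw [ha (Set.mem_Ioi.2 ht)]
  simp only [id]
  linarith

lemma mul_mul_add_one_nonneg_of_hasDerivAt {f : ℝ → ℝ} {a : ℝ} (ha : 0 < a)
    (hneg : ∀ s, 0 < s → f s < 0) (hderiv : ∀ s, 0 < s → HasDerivAt f (a * f s ^ 2) s)
    {t : ℝ} (ht : 0 < t) : 0 ≤ a * t * f t + 1 := by
  have haf : ∀ s, 0 < s → a * f s < 0 := fun s hs => mul_neg_of_pos_of_neg ha (hneg s hs)
  have hle : t ≤ -(a * f t)⁻¹ := by
    refine self_le_of_hasDerivAt_one_of_pos (h := fun s => -(a * f s)⁻¹)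
      (fun s hs => neg_pos.2 (inv_lt_zero.2 (haf s hs))) (fun s hs => ?_) ht
    refine (((hderiv s hs).const_mul a).inv (haf s hs).ne).neg.congr_deriv ?_
    field_simp [(hneg s hs).ne]
  rw [← inv_neg, ← one_div, le_div_iff₀ (neg_pos.2 (haf t ht))] at hle
  linarith

namespace Matrix

variable {n K : Type*} [Fintype n] [DecidableEq n] [Field K]

lemma inv_apply_eq_inv_det_mul_adjugate (M : Matrix n n K) (i j : n) :
    M⁻¹ i j = M.det⁻¹ * adjugate M i j := by
  rw [inv_def, Ring.inverse_eq_inv']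
  rfl

lemma trace_adjugate_mul (M N : Matrix n n K) (hM : M.det ≠ 0) :
    trace (adjugate M * N) = M.det * trace (M⁻¹ * N) := by
  rw [inv_def, Ring.inverse_eq_inv', smul_mul, trace_smul, smul_eq_mul, ← mul_assoc,
    mul_inv_cancel₀ hM, one_mul]

lemma hasDerivAt_det_fin_three {𝕜 : Type*} [NontriviallyNormedField 𝕜]
    {A : 𝕜 → Matrix (Fin 3) (Fin 3) 𝕜} {A' : Matrix (Fin 3) (Fin 3) 𝕜} {s : 𝕜}
    (h : ∀ i j, HasDerivAt (fun u => A u i j) (A' i j) s) :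
    HasDerivAt (fun u => (A u).det) (trace (adjugate (A s) * A')) s := by
  have hdet := (((((((h 0 0).mul (h 1 1)).mul (h 2 2)).sub (((h 0 0).mul (h 1 2)).mul (h 2 1))).sub
    (((h 0 1).mul (h 1 0)).mul (h 2 2))).add (((h 0 1).mul (h 1 2)).mul (h 2 0))).add
    (((h 0 2).mul (h 1 0)).mul (h 2 1))).sub (((h 0 2).mul (h 1 1)).mul (h 2 0))
  rw [show (fun u => (A u).det) = _ from funext fun u => det_fin_three (A u)]
  refine hdet.congr_deriv ?_
  simp [trace, adjugate_fin_three, Fin.sum_univ_three, vecMul, dotProduct]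
  ring

end Matrix

namespace RFN

lemma heis_of_ne_two (i j : Fin 3) {k : Fin 3} (hk : k ≠ 2) : heis i j k = 0 := by
  fin_cases i <;> fin_cases j <;> simp [heis, hk]

lemma sum_heis_mul (M : Matrix (Fin 3) (Fin 3) ℝ) (i j a : Fin 3) :
    ∑ k, heis i j k * M k a = heis i j 2 * M 2 a := by
  simp [Fin.sum_univ_three, heis_of_ne_two]

lemma gdot_heis (M : Matrix (Fin 3) (Fin 3) ℝ) (i j p q : Fin 3) :
    gdot M (heis i j) (heis p q) = heis i j 2 * heis p q 2 * M 2 2 := by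
  simp [gdot, Fin.sum_univ_three, heis_of_ne_two]
  ring

/-- Jacobi's complementary minor identity for the leading `2 × 2` minor of `M⁻¹`. -/
lemma inv_mul_inv_sub_inv_mul_inv (M : Matrix (Fin 3) (Fin 3) ℝ) (hM : M.det ≠ 0) :
    M⁻¹ 0 0 * M⁻¹ 1 1 - M⁻¹ 0 1 * M⁻¹ 1 0 = M 2 2 / M.det := by
  simp [inv_apply_eq_inv_det_mul_adjugate, adjugate_fin_three]
  field_simp
  rw [det_fin_three]
  ring

lemma sum_inv_mul_inv_heis (M : Matrix (Fin 3) (Fin 3) ℝ) (hM : M.det ≠ 0) (x y : ℝ) :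
    ∑ i, ∑ j, ∑ p, ∑ q, M⁻¹ i p * M⁻¹ j q * (heis i j 2 * x) * (heis p q 2 * y)
      = 2 * M 2 2 * x * y / M.det := by
  have h := inv_mul_inv_sub_inv_mul_inv M hM
  simp [Fin.sum_univ_three, heis]
  linear_combination (2 * x * y) * h

/-- For singular `M` both sides are `0`, since then `M⁻¹ = 0` and `x / 0 = 0`. -/
lemma scalR_heis (M : Matrix (Fin 3) (Fin 3) ℝ) :
    scalR heis M = -M 2 2 ^ 2 / (2 * M.det) := by
  by_cases hM : M.det = 0
  · simp [scalR, inv_apply_eq_inv_det_mul_adjugate, hM]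
  have h := inv_mul_inv_sub_inv_mul_inv M hM
  rw [eq_div_iff hM] at h
  simp [scalR, gdot_heis, Fin.sum_univ_three, heis]
  field_simp
  linear_combination (-4 * M 2 2) * h

lemma scalR_heis_neg {M : Matrix (Fin 3) (Fin 3) ℝ} (hM : M.PosDef) : scalR heis M < 0 := by
  rw [scalR_heis M]
  have := hM.det_pos
  exact div_neg_of_neg_of_pos (neg_neg_of_pos (pow_pos hM.diag_pos 2)) (by positivity)

lemma Ricm_heis_apply (M : Matrix (Fin 3) (Fin 3) ℝ) (hM : M.det ≠ 0) (a b : Fin 3) :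
    Ricm heis M a b = -(1 / 2) * M 2 2 * (∑ i, ∑ j, M⁻¹ i j * heis a i 2 * heis b j 2)
      + M 2 2 * M 2 a * M 2 b / (2 * M.det) := by
  simp only [Ricm, of_apply, gdot_heis, sum_heis_mul, sum_inv_mul_inv_heis M hM]
  simp only [← mul_assoc, ← Finset.sum_mul]
  ring

lemma Ricm_heis_two_two (M : Matrix (Fin 3) (Fin 3) ℝ) (hM : M.det ≠ 0) :
    Ricm heis M 2 2 = M 2 2 ^ 3 / (2 * M.det) := by
  rw [Ricm_heis_apply M hM]
  simp [heis]
  ring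

lemma trace_Rc_heis (M : Matrix (Fin 3) (Fin 3) ℝ) (hM : M.det ≠ 0) (hsymm : M.IsSymm) :
    trace (Rc heis M) = scalR heis M := by
  have h10 := hsymm.apply 0 1
  have h20 := hsymm.apply 0 2
  have h21 := hsymm.apply 1 2
  simp [Rc, trace, mul_apply, Ricm_heis_apply M hM, scalR_heis M, Fin.sum_univ_three, heis,
    inv_apply_eq_inv_det_mul_adjugate, adjugate_fin_three]
  field_simp
  simp only [det_fin_three, h10, h20, h21]
  ring

section RicciFlow

variable {G : ℝ → Matrix (Fin 3) (Fin 3) ℝ} {s : ℝ}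

lemma hasDerivAt_det_of_ricciFlow (hdet : (G s).det ≠ 0) (hsymm : (G s).IsSymm)
    (hflow : ∀ i j : Fin 3, HasDerivAt (fun u => G u i j) (-2 * Ricm heis (G s) i j) s) :
    HasDerivAt (fun u => (G u).det) (-2 * (G s).det * scalR heis (G s)) s := by
  refine (hasDerivAt_det_fin_three (A' := (-2 : ℝ) • Ricm heis (G s))
    fun i j => by simpa only [Matrix.smul_apply, smul_eq_mul] using hflow i j).congr_deriv ?_
  rw [mul_smul_comm, trace_smul, trace_adjugate_mul _ _ hdet, ← Rc, trace_Rc_heis _ hdet hsymm,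
    smul_eq_mul]
  ring

lemma hasDerivAt_two_two_of_ricciFlow (hdet : (G s).det ≠ 0)
    (hflow : ∀ i j : Fin 3, HasDerivAt (fun u => G u i j) (-2 * Ricm heis (G s) i j) s) :
    HasDerivAt (fun u => G u 2 2) (2 * scalR heis (G s) * G s 2 2) s := by
  refine (hflow 2 2).congr_deriv ?_
  rw [Ricm_heis_two_two _ hdet, scalR_heis]
  ring

lemma hasDerivAt_scalR_heis (hdet : (G s).det ≠ 0) (hsymm : (G s).IsSymm)
    (hflow : ∀ i j : Fin 3, HasDerivAt (fun u => G u i j) (-2 * Ricm heis (G s) i j) s) :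
    HasDerivAt (fun u => scalR heis (G u)) (6 * scalR heis (G s) ^ 2) s := by
  have hquot := ((hasDerivAt_two_two_of_ricciFlow hdet hflow).fun_pow 2).fun_neg.fun_div
    ((hasDerivAt_det_of_ricciFlow hdet hsymm hflow).const_mul 2) (mul_ne_zero two_ne_zero hdet)
  rw [show (fun u => scalR heis (G u)) = _ from funext fun u => scalR_heis (G u)]
  refine hquot.congr_deriv ?_
  rw [scalR_heis (G s)]
  field_simp
  ring

end RicciFlow

end RFN

theorem stmt12 (G : ℝ → Matrix (Fin 3) (Fin 3) ℝ)
    (hpd : ∀ t, 0 < t → (G t).PosDef)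
    (hflow : ∀ t, 0 < t → ∀ i j : Fin 3,
      HasDerivAt (fun u => G u i j) (-2 * Ricm heis (G t) i j) t)
    (t : ℝ) (ht : 0 < t) :
    HasDerivAt (fun u => scalR heis (G u)) (6 * (scalR heis (G t))^2) t ∧
    HasDerivAt (fun u => u * scalR heis (G u))
      (6 * t * scalR heis (G t) * (scalR heis (G t) + 1/(6*t))) t ∧
    6 * t * scalR heis (G t) * (scalR heis (G t) + 1/(6*t)) ≤ 0 := by
  have hR : ∀ s, 0 < s → HasDerivAt (fun u => scalR heis (G u)) (6 * scalR heis (G s) ^ 2) s :=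
    fun s hs => hasDerivAt_scalR_heis (hpd s hs).det_pos.ne'
      (isHermitian_iff_isSymm.1 (hpd s hs).isHermitian) (hflow s hs)
  have hneg : ∀ s, 0 < s → scalR heis (G s) < 0 := fun s hs => scalR_heis_neg (hpd s hs)
  have hlower := mul_mul_add_one_nonneg_of_hasDerivAt (by norm_num) hneg hR ht
  have hfactor : 6 * t * scalR heis (G t) * (scalR heis (G t) + 1 / (6 * t)) =
      scalR heis (G t) * (6 * t * scalR heis (G t) + 1) := by
    field_simp
  refine ⟨hR t ht, ?_, ?_⟩
  · rw [hfactor]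
    refine ((hasDerivAt_id' t).mul (hR t ht)).congr_deriv ?_
    ring
  · rw [hfactor]
    exact mul_nonpos_of_nonpos_of_nonneg (hneg t ht).le hlower
end

section
/- Let G(t) be a smooth family of inner products on a finite-dimensional real Lie algebra 𝔤. Then for any fixed A ∈ End 𝔤: ⟨(d/dt)Rc_{G(t)}, A⟩ = (1/4)⟨δ(G⁻¹ dG/dt), δ(A*)⟩, where Rc_G = G⁻¹Ric_G, A* is the G(t)-adjoint of A, δ(B)(x,y) = B[x,y] − [Bx,y] − [x,By], and inner products on End 𝔤 and on Λ²𝔤*⊗𝔤 are induced by G(t). -/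
open Matrix

/-! Differentiate the moment-map identity `⟨Rc_G, A⟩ = ¼⟨δ(A), μ⟩` (`μ` the bracket) along `G(t)`,
with `B = G⁻¹ dG/dt`. The variation of the metric turns the left side into
`⟨dRc/dt, A⟩ − ⟨Rc_G, [A,B]⟩ = ⟨dRc/dt, A⟩ − ¼⟨δ([A,B]), μ⟩` and the right side into
`¼⟨δ(A), δ(B)⟩`. Since `B` is `G`-self-adjoint, the adjoint relation
`⟨δ(A*), δ(B)⟩ = ⟨δ(B), δ(A)⟩ + ⟨μ, δ([A,B])⟩`, which follows from `δ(A)* = δ(A*)` and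
`[δ(A), δ(B)] = δ([A,B])`, closes the computation.

The inner product on `Λ²𝔤*⊗𝔤` contracts the three tensor slots with `G⁻¹, G⁻¹, G`. Allowing three
independent matrices `X, Y, Z` there (`tinnerWith`), each of the three terms of `δ(A)` acts on a
single slot by multiplication with `A`, so the tensor identities reduce to matrix algebra. -/

namespace RFN

variable {n : ℕ}

lemma sum_comm_four {α β γ δ ε M : Type*} [Fintype α] [Fintype β] [Fintype γ] [Fintype δ]
    [Fintype ε] [AddCommMonoid M] (f : α → β → γ → δ → ε → M) :
    ∑ a, ∑ i, ∑ j, ∑ p, ∑ q, f a i j p q = ∑ i, ∑ j, ∑ p, ∑ q, ∑ a, f a i j p q := by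
  rw [Finset.sum_comm]
  refine Finset.sum_congr rfl fun i _ => ?_
  rw [Finset.sum_comm]
  refine Finset.sum_congr rfl fun j _ => ?_
  rw [Finset.sum_comm]
  exact Finset.sum_congr rfl fun p _ => Finset.sum_comm

lemma sum_sum_mul_sum_eq_mul {ι κ R : Type*} [Fintype ι] [Fintype κ] [CommSemiring R]
    (X : Matrix ι κ R) (A : Matrix ι ι R) (F : ι → κ → R) :
    ∑ i, ∑ p, X i p * ∑ l, A l i * F l p = ∑ l, ∑ p, (A * X) l p * F l p := by
  simp only [mul_apply, Finset.sum_mul, Finset.mul_sum]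
  rw [Finset.sum_comm]
  refine (Finset.sum_congr rfl fun p _ => Finset.sum_comm).trans Finset.sum_comm |>.trans ?_
  exact Finset.sum_congr rfl fun l _ => Finset.sum_congr rfl fun p _ =>
    Finset.sum_congr rfl fun i _ => by ring

lemma sum_sum_mul_eq_trace {ι R : Type*} [Fintype ι] [CommSemiring R] (M N : Matrix ι ι R) :
    ∑ a, ∑ b, M a b * N a b = trace (Mᵀ * N) := by
  simp only [trace, diag, mul_apply, transpose_apply]
  exact Finset.sum_comm

lemma gdot_eq_dotProduct (Z : Matrix (Fin n) (Fin n) ℝ) (x y : Fin n → ℝ) :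
    gdot Z x y = x ⬝ᵥ Z *ᵥ y := by
  simp only [gdot, dotProduct, mulVec, Finset.mul_sum, mul_assoc]

lemma gdot_mulVec_left (Z A : Matrix (Fin n) (Fin n) ℝ) (x y : Fin n → ℝ) :
    gdot Z (A *ᵥ x) y = gdot (Aᵀ * Z) x y := by
  rw [gdot_eq_dotProduct, gdot_eq_dotProduct, ← vecMul_transpose, ← dotProduct_mulVec,
    mulVec_mulVec]

lemma gdot_comm (Z : Matrix (Fin n) (Fin n) ℝ) (x y : Fin n → ℝ) :
    gdot Z x y = gdot Zᵀ y x := by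
  rw [gdot_eq_dotProduct, gdot_eq_dotProduct, mulVec_transpose, dotProduct_mulVec,
    dotProduct_comm]

lemma gdot_sum_smul_left (Z : Matrix (Fin n) (Fin n) ℝ) (a : Fin n → ℝ) (v : Fin n → Fin n → ℝ)
    (y : Fin n → ℝ) : gdot Z (∑ l, a l • v l) y = ∑ l, a l * gdot Z (v l) y := by
  simp only [gdot_eq_dotProduct, sum_dotProduct, smul_dotProduct, smul_eq_mul]

lemma gdot_mul_mul_transpose (G W : Matrix (Fin n) (Fin n) ℝ) (x y : Fin n → ℝ) :
    gdot (G * W * Gᵀ) x y = gdot W (x ᵥ* G) (y ᵥ* G) := by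
  rw [gdot_eq_dotProduct, gdot_eq_dotProduct, ← mulVec_mulVec, ← mulVec_mulVec,
    dotProduct_mulVec, mulVec_transpose]

def postcomp (A : Matrix (Fin n) (Fin n) ℝ) (μ : Fin n → Fin n → Fin n → ℝ) :
    Fin n → Fin n → Fin n → ℝ :=
  fun i j => A *ᵥ μ i j

def precompFst (A : Matrix (Fin n) (Fin n) ℝ) (μ : Fin n → Fin n → Fin n → ℝ) :
    Fin n → Fin n → Fin n → ℝ :=
  fun i j => ∑ l, A l i • μ l j

def precompSnd (A : Matrix (Fin n) (Fin n) ℝ) (μ : Fin n → Fin n → Fin n → ℝ) :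
    Fin n → Fin n → Fin n → ℝ :=
  fun i j => ∑ l, A l j • μ i l

section slotActions
variable (A B : Matrix (Fin n) (Fin n) ℝ) (μ ν : Fin n → Fin n → Fin n → ℝ)

lemma precompSnd_eq_flip : precompSnd A μ = flip (precompFst A (flip μ)) := rfl

lemma postcomp_flip : postcomp A (flip μ) = flip (postcomp A μ) := rfl

lemma postcomp_sub : postcomp A (μ - ν) = postcomp A μ - postcomp A ν := by
  ext i j : 2; exact mulVec_sub A _ _

lemma precompFst_sub : precompFst A (μ - ν) = precompFst A μ - precompFst A ν := by
  ext i j : 2; simp [precompFst, smul_sub, Finset.sum_sub_distrib]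

lemma precompSnd_sub : precompSnd A (μ - ν) = precompSnd A μ - precompSnd A ν := by
  ext i j : 2; simp [precompSnd, smul_sub, Finset.sum_sub_distrib]

lemma sub_postcomp : postcomp (A - B) μ = postcomp A μ - postcomp B μ := by
  ext i j : 2; exact sub_mulVec A B _

lemma sub_precompFst : precompFst (A - B) μ = precompFst A μ - precompFst B μ := by
  ext i j : 2; simp [precompFst, sub_smul, Finset.sum_sub_distrib]

lemma sub_precompSnd : precompSnd (A - B) μ = precompSnd A μ - precompSnd B μ := by
  ext i j : 2; simp [precompSnd, sub_smul, Finset.sum_sub_distrib]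

lemma postcomp_postcomp : postcomp A (postcomp B μ) = postcomp (A * B) μ := by
  ext i j : 2; exact mulVec_mulVec _ A B

lemma precompFst_precompFst : precompFst A (precompFst B μ) = precompFst (B * A) μ := by
  ext i j : 2
  simp only [precompFst, Finset.smul_sum, smul_smul, mul_apply, Finset.sum_smul]
  rw [Finset.sum_comm]
  exact Finset.sum_congr rfl fun l _ => Finset.sum_congr rfl fun m _ => by rw [mul_comm]

lemma precompSnd_precompSnd : precompSnd A (precompSnd B μ) = precompSnd (B * A) μ := by
  simp only [precompSnd_eq_flip, flip_flip, precompFst_precompFst]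

lemma postcomp_precompFst : postcomp A (precompFst B μ) = precompFst B (postcomp A μ) := by
  ext i j : 2; simp [postcomp, precompFst, mulVec_sum, mulVec_smul]

lemma postcomp_precompSnd : postcomp A (precompSnd B μ) = precompSnd B (postcomp A μ) := by
  simp only [precompSnd_eq_flip, postcomp_flip, postcomp_precompFst]

lemma precompFst_precompSnd : precompFst A (precompSnd B μ) = precompSnd B (precompFst A μ) := by
  ext i j : 2
  simp only [precompFst, precompSnd, Finset.smul_sum, smul_smul]
  rw [Finset.sum_comm]
  exact Finset.sum_congr rfl fun l _ => Finset.sum_congr rfl fun m _ => by rw [mul_comm]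

lemma deltaE_eq : deltaE μ A = postcomp A μ - precompFst A μ - precompSnd A μ := by
  ext i j k
  simp [deltaE, postcomp, precompFst, precompSnd, mulVec, dotProduct, Finset.sum_apply]

lemma deltaE_deltaE_sub_deltaE_deltaE :
    deltaE (deltaE μ B) A - deltaE (deltaE μ A) B = deltaE μ (A * B - B * A) := by
  simp only [deltaE_eq, postcomp_sub, precompFst_sub, precompSnd_sub, sub_postcomp,
    sub_precompFst, sub_precompSnd, postcomp_postcomp, precompFst_precompFst,
    precompSnd_precompSnd, postcomp_precompFst, postcomp_precompSnd, precompFst_precompSnd]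
  abel

end slotActions

def tinnerWith (X Y Z : Matrix (Fin n) (Fin n) ℝ) (μ ν : Fin n → Fin n → Fin n → ℝ) : ℝ :=
  ∑ i, ∑ j, ∑ p, ∑ q, X i p * Y j q * gdot Z (μ i j) (ν p q)

section tinnerWith

variable (X Y Z A : Matrix (Fin n) (Fin n) ℝ) (μ ν : Fin n → Fin n → Fin n → ℝ)

lemma tinnerWith_eq_sum_fst : tinnerWith X Y Z μ ν
    = ∑ i, ∑ p, X i p * ∑ j, ∑ q, Y j q * gdot Z (μ i j) (ν p q) := by
  unfold tinnerWith
  refine Finset.sum_congr rfl fun i _ => ?_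
  rw [Finset.sum_comm]
  simp only [Finset.mul_sum, mul_assoc]

lemma tinnerWith_comm : tinnerWith X Y Z μ ν = tinnerWith Xᵀ Yᵀ Zᵀ ν μ := by
  rw [tinnerWith_eq_sum_fst, tinnerWith_eq_sum_fst, Finset.sum_comm]
  refine Finset.sum_congr rfl fun p _ => Finset.sum_congr rfl fun i _ => ?_
  rw [Finset.sum_comm]
  simp only [transpose_apply, ← gdot_comm]

lemma tinnerWith_flip : tinnerWith X Y Z μ ν = tinnerWith Y X Z (flip μ) (flip ν) := by
  unfold tinnerWith
  rw [Finset.sum_comm]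
  refine Finset.sum_congr rfl fun j _ => Finset.sum_congr rfl fun i _ => ?_
  rw [Finset.sum_comm]
  exact Finset.sum_congr rfl fun q _ => Finset.sum_congr rfl fun p _ => by
    simp only [flip]; ring

lemma tinnerWith_postcomp_left :
    tinnerWith X Y Z (postcomp A μ) ν = tinnerWith X Y (Aᵀ * Z) μ ν := by
  simp only [tinnerWith, postcomp, gdot_mulVec_left]

lemma tinnerWith_precompFst_left :
    tinnerWith X Y Z (precompFst A μ) ν = tinnerWith (A * X) Y Z μ ν := by
  rw [tinnerWith_eq_sum_fst, tinnerWith_eq_sum_fst, ← sum_sum_mul_sum_eq_mul]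
  refine Finset.sum_congr rfl fun i _ => Finset.sum_congr rfl fun p _ => ?_
  simp only [precompFst, gdot_sum_smul_left, Finset.mul_sum]
  refine (Finset.sum_congr rfl fun j _ => Finset.sum_comm).trans Finset.sum_comm |>.trans ?_
  exact Finset.sum_congr rfl fun l _ => Finset.sum_congr rfl fun j _ =>
    Finset.sum_congr rfl fun q _ => by ring

lemma tinnerWith_postcomp_right :
    tinnerWith X Y Z μ (postcomp A ν) = tinnerWith X Y (Z * A) μ ν := by
  rw [tinnerWith_comm, tinnerWith_postcomp_left, tinnerWith_comm]
  simp only [transpose_transpose, transpose_mul]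

lemma tinnerWith_precompFst_right :
    tinnerWith X Y Z μ (precompFst A ν) = tinnerWith (X * Aᵀ) Y Z μ ν := by
  rw [tinnerWith_comm, tinnerWith_precompFst_left, tinnerWith_comm]
  simp only [transpose_transpose, transpose_mul]

lemma tinnerWith_precompSnd_left :
    tinnerWith X Y Z (precompSnd A μ) ν = tinnerWith X (A * Y) Z μ ν := by
  rw [tinnerWith_flip, precompSnd_eq_flip, flip_flip, tinnerWith_precompFst_left,
    tinnerWith_flip]
  rfl

lemma tinnerWith_precompSnd_right :
    tinnerWith X Y Z μ (precompSnd A ν) = tinnerWith X (Y * Aᵀ) Z μ ν := by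
  rw [tinnerWith_flip, precompSnd_eq_flip, flip_flip, tinnerWith_precompFst_right,
    tinnerWith_flip]
  rfl

lemma tinnerWith_sub_left (μ' : Fin n → Fin n → Fin n → ℝ) :
    tinnerWith X Y Z (μ - μ') ν = tinnerWith X Y Z μ ν - tinnerWith X Y Z μ' ν := by
  simp only [tinnerWith, gdot, Pi.sub_apply, sub_mul, mul_sub, Finset.sum_sub_distrib]

lemma tinnerWith_sub_right (ν' : Fin n → Fin n → Fin n → ℝ) :
    tinnerWith X Y Z μ (ν - ν') = tinnerWith X Y Z μ ν - tinnerWith X Y Z μ ν' := by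
  simp only [tinnerWith, gdot, Pi.sub_apply, mul_sub, Finset.sum_sub_distrib]

lemma tinnerWith_neg_fst : tinnerWith (-X) Y Z μ ν = -tinnerWith X Y Z μ ν := by
  simp only [tinnerWith, Matrix.neg_apply, neg_mul, Finset.sum_neg_distrib]

lemma tinnerWith_neg_snd : tinnerWith X (-Y) Z μ ν = -tinnerWith X Y Z μ ν := by
  simp only [tinnerWith, Matrix.neg_apply, neg_mul, mul_neg, Finset.sum_neg_distrib]

lemma tinnerWith_deltaE_left : tinnerWith X Y Z (deltaE μ A) ν
    = tinnerWith X Y (Aᵀ * Z) μ ν - tinnerWith (A * X) Y Z μ ν - tinnerWith X (A * Y) Z μ ν := by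
  rw [deltaE_eq, tinnerWith_sub_left, tinnerWith_sub_left, tinnerWith_postcomp_left,
    tinnerWith_precompFst_left, tinnerWith_precompSnd_left]

lemma tinnerWith_deltaE_right : tinnerWith X Y Z μ (deltaE ν A)
    = tinnerWith X Y (Z * A) μ ν - tinnerWith (X * Aᵀ) Y Z μ ν - tinnerWith X (Y * Aᵀ) Z μ ν := by
  rw [deltaE_eq, tinnerWith_sub_right, tinnerWith_sub_right, tinnerWith_postcomp_right,
    tinnerWith_precompFst_right, tinnerWith_precompSnd_right]

lemma tinnerWith_neg_neg : tinnerWith X Y Z (-μ) (-ν) = tinnerWith X Y Z μ ν := by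
  simp only [tinnerWith, gdot, Pi.neg_apply, neg_mul, mul_neg, neg_neg]

lemma tinnerWith_self_comm_of_antisymm {c : Fin n → Fin n → Fin n → ℝ}
    (hc : ∀ i j k, c i j k = -c j i k) :
    tinnerWith X Y Z c c = tinnerWith Y X Z c c := by
  have hflip : flip c = -c := by
    ext i j k
    exact hc j i k
  rw [tinnerWith_flip, hflip, tinnerWith_neg_neg]

end tinnerWith

section tinner

variable {G : Matrix (Fin n) (Fin n) ℝ} (μ ν : Fin n → Fin n → Fin n → ℝ)

lemma tinner_eq_tinnerWith : tinner G μ ν = tinnerWith G⁻¹ G⁻¹ G μ ν := rfl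

lemma tinner_comm (hs : G.IsSymm) : tinner G μ ν = tinner G ν μ := by
  rw [tinner_eq_tinnerWith, tinnerWith_comm, transpose_nonsing_inv, hs.eq]
  rfl

lemma tinner_sub_right (ν' : Fin n → Fin n → Fin n → ℝ) :
    tinner G μ (ν - ν') = tinner G μ ν - tinner G μ ν' :=
  tinnerWith_sub_right _ _ _ _ _ _

lemma nonsing_inv_mul_transpose_mul_transpose (hG : IsUnit G.det) (hs : G.IsSymm)
    (A : Matrix (Fin n) (Fin n) ℝ) : G⁻¹ * (G⁻¹ * Aᵀ * G)ᵀ = A * G⁻¹ := by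
  rw [transpose_mul, transpose_mul, transpose_transpose, transpose_nonsing_inv, hs.eq,
    nonsing_inv_mul_cancel_left _ _ hG]

lemma nonsing_inv_mul_transpose_mul_involutive (hG : IsUnit G.det) (hs : G.IsSymm)
    (A : Matrix (Fin n) (Fin n) ℝ) : G⁻¹ * (G⁻¹ * Aᵀ * G)ᵀ * G = A := by
  rw [nonsing_inv_mul_transpose_mul_transpose hG hs, Matrix.mul_assoc,
    nonsing_inv_mul _ hG, Matrix.mul_one]

lemma tinner_deltaE_left (hG : IsUnit G.det) (hs : G.IsSymm) (A : Matrix (Fin n) (Fin n) ℝ) :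
    tinner G (deltaE μ A) ν = tinner G μ (deltaE ν (G⁻¹ * Aᵀ * G)) := by
  have hout : G * (G⁻¹ * Aᵀ * G) = Aᵀ * G := by
    rw [Matrix.mul_assoc, mul_nonsing_inv_cancel_left _ _ hG]
  simp only [tinner_eq_tinnerWith, tinnerWith_deltaE_left, tinnerWith_deltaE_right, hout,
    nonsing_inv_mul_transpose_mul_transpose hG hs]

lemma tinner_deltaE_adjoint (hG : IsUnit G.det) (hs : G.IsSymm) (A B : Matrix (Fin n) (Fin n) ℝ)
    (hB : G⁻¹ * Bᵀ * G = B) :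
    tinner G (deltaE μ (G⁻¹ * Aᵀ * G)) (deltaE μ B)
      = tinner G (deltaE μ B) (deltaE μ A) + tinner G μ (deltaE μ (A * B - B * A)) := by
  rw [tinner_deltaE_left _ _ hG hs, nonsing_inv_mul_transpose_mul_involutive hG hs,
    tinner_deltaE_left _ _ hG hs, hB, ← deltaE_deltaE_sub_deltaE_deltaE, tinner_sub_right]
  ring

end tinner

lemma einner_eq_trace (G P A : Matrix (Fin n) (Fin n) ℝ) :
    einner G P A = trace (G⁻¹ᵀ * (Pᵀ * G * A)) := by
  rw [← sum_sum_mul_eq_trace]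
  refine Finset.sum_congr rfl fun i _ => Finset.sum_congr rfl fun j _ => ?_
  rw [gdot_eq_dotProduct, Matrix.mul_assoc, mul_apply]
  simp only [dotProduct, mulVec, transpose_apply, mul_apply]

lemma einner_nonsing_inv_mul {G : Matrix (Fin n) (Fin n) ℝ} (hG : IsUnit G.det) (hs : G.IsSymm)
    (R A : Matrix (Fin n) (Fin n) ℝ) : einner G (G⁻¹ * R) A = trace (Rᵀ * (A * G⁻¹)) := by
  rw [einner_eq_trace, transpose_mul, transpose_nonsing_inv, hs.eq, Matrix.mul_assoc,
    Matrix.mul_assoc, nonsing_inv_mul_cancel_left _ _ hG, trace_mul_comm, Matrix.mul_assoc]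

lemma sum_Ricm_mul (c : Fin n → Fin n → Fin n → ℝ) (G W : Matrix (Fin n) (Fin n) ℝ) :
    ∑ a, ∑ b, Ricm c G a b * W a b
      = -(1/2) * tinnerWith W G⁻¹ G c c + (1/4) * tinnerWith G⁻¹ G⁻¹ (G * W * Gᵀ) c c := by
  have hfirst : ∑ a, ∑ b, (∑ i, ∑ j, G⁻¹ i j * gdot G (c a i) (c b j)) * W a b
      = tinnerWith W G⁻¹ G c c := by
    rw [tinnerWith_eq_sum_fst]
    simp only [mul_comm _ (W _ _)]
  have hsecond : ∑ a, ∑ b, (∑ i, ∑ j, ∑ p, ∑ q, G⁻¹ i p * G⁻¹ j q *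
        (∑ k, c i j k * G k a) * (∑ l, c p q l * G l b)) * W a b
      = tinnerWith G⁻¹ G⁻¹ (G * W * Gᵀ) c c := by
    change ∑ a, ∑ b, (∑ i, ∑ j, ∑ p, ∑ q, G⁻¹ i p * G⁻¹ j q *
        (c i j ᵥ* G) a * (c p q ᵥ* G) b) * W a b = _
    simp only [tinnerWith, gdot_mul_mul_transpose]
    simp only [gdot, Finset.sum_mul, Finset.mul_sum]
    rw [Finset.sum_congr rfl fun a _ => sum_comm_four _, sum_comm_four]
    refine Finset.sum_congr rfl fun i _ => Finset.sum_congr rfl fun j _ =>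
      Finset.sum_congr rfl fun p _ => Finset.sum_congr rfl fun q _ =>
        Finset.sum_congr rfl fun a _ => Finset.sum_congr rfl fun b _ => by ring
  rw [← hfirst, ← hsecond, Finset.mul_sum, Finset.mul_sum, ← Finset.sum_add_distrib]
  refine Finset.sum_congr rfl fun a _ => ?_
  rw [Finset.mul_sum, Finset.mul_sum, ← Finset.sum_add_distrib]
  refine Finset.sum_congr rfl fun b _ => ?_
  simp only [Ricm, of_apply]
  ring

lemma einner_Rc_eq_tinner_deltaE {c : Fin n → Fin n → Fin n → ℝ} (hc : ∀ i j k, c i j k = -c j i k)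
    {G : Matrix (Fin n) (Fin n) ℝ} (hG : IsUnit G.det) (hs : G.IsSymm)
    (A : Matrix (Fin n) (Fin n) ℝ) :
    einner G (Rc c G) A = 4⁻¹ * tinner G (deltaE c A) c := by
  have hW : G * (A * G⁻¹) * Gᵀ = G * A := by
    rw [hs.eq, Matrix.mul_assoc, Matrix.mul_assoc, nonsing_inv_mul _ hG, Matrix.mul_one]
  have hcomm : tinnerWith G⁻¹ G⁻¹ (G * A) c c = tinnerWith G⁻¹ G⁻¹ (Aᵀ * G) c c := by
    rw [tinnerWith_comm, transpose_nonsing_inv, transpose_mul, hs.eq]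
  rw [Rc, einner_nonsing_inv_mul hG hs, ← sum_sum_mul_eq_trace, sum_Ricm_mul, hW, hcomm,
    tinner_eq_tinnerWith, tinnerWith_deltaE_left,
    tinnerWith_self_comm_of_antisymm G⁻¹ (A * G⁻¹) G hc]
  ring

def HasMatrixDerivAt {m p : Type*} (M : ℝ → Matrix m p ℝ) (M' : Matrix m p ℝ) (t : ℝ) : Prop :=
  ∀ i j, HasDerivAt (fun u => M u i j) (M' i j) t

namespace HasMatrixDerivAt

variable {m p q : Type*} {t : ℝ}

lemma const (A : Matrix m p ℝ) (t : ℝ) : HasMatrixDerivAt (fun _ => A) 0 t :=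
  fun i j => hasDerivAt_const t (A i j)

lemma mul [Fintype p] {X : ℝ → Matrix m p ℝ} {Y : ℝ → Matrix p q ℝ} {X' : Matrix m p ℝ}
    {Y' : Matrix p q ℝ} (hX : HasMatrixDerivAt X X' t) (hY : HasMatrixDerivAt Y Y' t) :
    HasMatrixDerivAt (fun u => X u * Y u) (X' * Y t + X t * Y') t := by
  intro i j
  rw [Matrix.add_apply, mul_apply, mul_apply, ← Finset.sum_add_distrib]
  exact HasDerivAt.fun_sum fun k _ => (hX i k).mul (hY k j)

lemma transpose {X : ℝ → Matrix m p ℝ} {X' : Matrix m p ℝ} (hX : HasMatrixDerivAt X X' t) :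
    HasMatrixDerivAt (fun u => (X u)ᵀ) X'ᵀ t :=
  fun i j => hX j i

lemma trace [Fintype m] {X : ℝ → Matrix m m ℝ} {X' : Matrix m m ℝ}
    (hX : HasMatrixDerivAt X X' t) : HasDerivAt (fun u => (X u).trace) X'.trace t :=
  HasDerivAt.fun_sum fun i _ => hX i i

lemma isSymm {G : ℝ → Matrix m m ℝ} {H : Matrix m m ℝ} (hG : HasMatrixDerivAt G H t)
    (hs : ∀ u, (G u).IsSymm) : H.IsSymm := by
  ext i j
  have hji : HasDerivAt (fun u => G u i j) (H j i) t := by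
    simpa only [fun u => (hs u).apply i j] using hG j i
  exact hji.unique (hG i j)

end HasMatrixDerivAt

section inverse

open Filter Topology

variable {m : Type*} [Fintype m] [DecidableEq m] {X : ℝ → Matrix m m ℝ} {t : ℝ}

lemma differentiableAt_det (hX : ∀ i j, DifferentiableAt ℝ (fun u => X u i j) t) :
    DifferentiableAt ℝ (fun u => (X u).det) t := by
  simp only [det_apply']
  exact DifferentiableAt.fun_sum fun σ _ =>
    (DifferentiableAt.fun_finsetProd fun i _ => hX (σ i) i).const_mul _

lemma differentiableAt_inv_apply (hX : ∀ i j, DifferentiableAt ℝ (fun u => X u i j) t)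
    (hdet : (X t).det ≠ 0) (i j : m) : DifferentiableAt ℝ (fun u => (X u)⁻¹ i j) t := by
  have hformula : (fun u => (X u)⁻¹ i j)
      = fun u => ((X u).det)⁻¹ * ((X u).updateRow j (Pi.single i 1)).det := by
    funext u
    rw [inv_def, Ring.inverse_eq_inv', Matrix.smul_apply, adjugate_apply, smul_eq_mul]
  rw [hformula]
  refine ((differentiableAt_det hX).inv hdet).mul (differentiableAt_det fun k l => ?_)
  by_cases hk : k = j
  · simp only [hk, updateRow_self]
    exact differentiableAt_const _
  · simpa only [updateRow_ne hk] using hX k l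

lemma HasMatrixDerivAt.inv {X' : Matrix m m ℝ} (hX : HasMatrixDerivAt X X' t)
    (hdet : IsUnit (X t).det) :
    HasMatrixDerivAt (fun u => (X u)⁻¹) (-((X t)⁻¹ * X' * (X t)⁻¹)) t := by
  have hdiff : ∀ i j, DifferentiableAt ℝ (fun u => X u i j) t :=
    fun i j => (hX i j).differentiableAt
  set K : Matrix m m ℝ := of fun i j => deriv (fun u => (X u)⁻¹ i j) t
  have hK : HasMatrixDerivAt (fun u => (X u)⁻¹) K t := fun i j =>
    (differentiableAt_inv_apply hdiff hdet.ne_zero i j).hasDerivAt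
  have hone : (fun u => X u * (X u)⁻¹) =ᶠ[𝓝 t] fun _ => 1 := by
    filter_upwards [(differentiableAt_det hdiff).continuousAt.eventually_ne hdet.ne_zero]
      with u hu using mul_nonsing_inv _ hu.isUnit
  have hprod : X' * (X t)⁻¹ + X t * K = 0 := by
    ext i j
    exact ((hX.mul hK) i j).unique
      ((HasMatrixDerivAt.const 1 t i j).congr_of_eventuallyEq (hone.fun_comp fun M => M i j))
  have hKeq : K = -((X t)⁻¹ * X' * (X t)⁻¹) := by
    rw [← nonsing_inv_mul_cancel_left (X t) K hdet, eq_neg_of_add_eq_zero_right hprod]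
    simp only [Matrix.mul_neg, Matrix.mul_assoc]
  rwa [hKeq] at hK

end inverse

section derivatives

variable {t : ℝ}

lemma hasDerivAt_gdot {Z : ℝ → Matrix (Fin n) (Fin n) ℝ} {Z' : Matrix (Fin n) (Fin n) ℝ}
    (hZ : HasMatrixDerivAt Z Z' t) (x y : Fin n → ℝ) :
    HasDerivAt (fun u => gdot (Z u) x y) (gdot Z' x y) t :=
  HasDerivAt.fun_sum fun i _ => HasDerivAt.fun_sum fun j _ =>
    ((hZ i j).const_mul (x i)).mul_const (y j)

lemma hasDerivAt_tinnerWith {X Y Z : ℝ → Matrix (Fin n) (Fin n) ℝ}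
    {X' Y' Z' : Matrix (Fin n) (Fin n) ℝ} (hX : HasMatrixDerivAt X X' t)
    (hY : HasMatrixDerivAt Y Y' t) (hZ : HasMatrixDerivAt Z Z' t)
    (μ ν : Fin n → Fin n → Fin n → ℝ) :
    HasDerivAt (fun u => tinnerWith (X u) (Y u) (Z u) μ ν)
      (tinnerWith X' (Y t) (Z t) μ ν + tinnerWith (X t) Y' (Z t) μ ν
        + tinnerWith (X t) (Y t) Z' μ ν) t := by
  refine (HasDerivAt.fun_sum fun i _ => HasDerivAt.fun_sum fun j _ =>
    HasDerivAt.fun_sum fun p _ => HasDerivAt.fun_sum fun q _ =>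
      ((hX i p).mul (hY j q)).mul (hasDerivAt_gdot hZ (μ i j) (ν p q))).congr_deriv ?_
  simp only [tinnerWith, ← Finset.sum_add_distrib]
  refine Finset.sum_congr rfl fun i _ => Finset.sum_congr rfl fun j _ =>
    Finset.sum_congr rfl fun p _ => Finset.sum_congr rfl fun q _ => by
      rw [Pi.mul_apply]; ring

variable {G : ℝ → Matrix (Fin n) (Fin n) ℝ} {H : Matrix (Fin n) (Fin n) ℝ}

lemma hasDerivAt_tinner (hG : HasMatrixDerivAt G H t) (hdet : IsUnit (G t).det)
    (hs : (G t).IsSymm) (hH : H.IsSymm) (μ ν : Fin n → Fin n → Fin n → ℝ) :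
    HasDerivAt (fun u => tinner (G u) μ ν) (tinner (G t) μ (deltaE ν ((G t)⁻¹ * H))) t := by
  have hadj : (G t)⁻¹ * ((G t)⁻¹ * H)ᵀ = (G t)⁻¹ * H * (G t)⁻¹ := by
    rw [transpose_mul, transpose_nonsing_inv, hs.eq, hH.eq, Matrix.mul_assoc]
  refine (hasDerivAt_tinnerWith (hG.inv hdet) (hG.inv hdet) hG μ ν).congr_deriv ?_
  rw [tinner_eq_tinnerWith, tinnerWith_deltaE_right, mul_nonsing_inv_cancel_left _ _ hdet, hadj,
    tinnerWith_neg_fst, tinnerWith_neg_snd]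
  ring

lemma hasDerivAt_einner {P : ℝ → Matrix (Fin n) (Fin n) ℝ} {P' : Matrix (Fin n) (Fin n) ℝ}
    (hG : HasMatrixDerivAt G H t) (hP : HasMatrixDerivAt P P' t) (hdet : IsUnit (G t).det)
    (hs : (G t).IsSymm) (hH : H.IsSymm) (A : Matrix (Fin n) (Fin n) ℝ) :
    HasDerivAt (fun u => einner (G u) (P u) A)
      (einner (G t) P' A - einner (G t) (P t) (A * ((G t)⁻¹ * H) - (G t)⁻¹ * H * A)) t := by
  simp only [einner_eq_trace]
  refine ((hG.inv hdet).transpose.mul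
    ((hP.transpose.mul hG).mul (HasMatrixDerivAt.const A t))).trace.congr_deriv ?_
  simp only [transpose_neg, transpose_mul, transpose_nonsing_inv, hs.eq, hH.eq, Matrix.mul_zero,
    add_zero]
  have hcyc : ((G t)⁻¹ * H * ((G t)⁻¹ * ((P t)ᵀ * G t * A))).trace
      = ((G t)⁻¹ * ((P t)ᵀ * G t * A) * ((G t)⁻¹ * H)).trace := trace_mul_comm _ _
  simp only [Matrix.mul_assoc] at hcyc
  simp only [Matrix.neg_mul, Matrix.add_mul, Matrix.mul_add, Matrix.mul_sub,
    trace_add, trace_sub, trace_neg, Matrix.mul_assoc, mul_nonsing_inv_cancel_left _ _ hdet, hcyc]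
  ring

end derivatives

end RFN

open RFN Matrix

theorem stmt17 {n : ℕ} (cs : Fin n → Fin n → Fin n → ℝ) (hcs : IsLieSC cs)
    (G : ℝ → Matrix (Fin n) (Fin n) ℝ) (hpd : ∀ t, (G t).PosDef) (hsym : ∀ t, (G t).IsSymm)
    (t₀ : ℝ) (H : Matrix (Fin n) (Fin n) ℝ)
    (hder : ∀ i j, HasDerivAt (fun u => G u i j) (H i j) t₀)
    (Rc' : Matrix (Fin n) (Fin n) ℝ)
    (hRc' : ∀ i j, HasDerivAt (fun u => Rc cs (G u) i j) (Rc' i j) t₀)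
    (A : Matrix (Fin n) (Fin n) ℝ) :
    einner (G t₀) Rc' A
      = (1/4) * tinner (G t₀) (deltaE cs ((G t₀)⁻¹ * H))
          (deltaE cs ((G t₀)⁻¹ * A.transpose * (G t₀))) := by
  have hdet : ∀ u, IsUnit (G u).det := fun u => (hpd u).det_pos.ne'.isUnit
  have hG : HasMatrixDerivAt G H t₀ := hder
  have hH : H.IsSymm := hG.isSymm hsym
  set B := (G t₀)⁻¹ * H
  have hB : (G t₀)⁻¹ * Bᵀ * G t₀ = B := by
    rw [transpose_mul, transpose_nonsing_inv, (hsym t₀).eq, hH.eq, Matrix.mul_assoc,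
      nonsing_inv_mul_cancel_right _ _ (hdet t₀)]
  have hvar : HasDerivAt (fun u => einner (G u) (Rc cs (G u)) A)
      (einner (G t₀) Rc' A - einner (G t₀) (Rc cs (G t₀)) (A * B - B * A)) t₀ :=
    hasDerivAt_einner hG hRc' (hdet t₀) (hsym t₀) hH A
  have hmoment : HasDerivAt (fun u => einner (G u) (Rc cs (G u)) A)
      (4⁻¹ * tinner (G t₀) (deltaE cs A) (deltaE cs B)) t₀ := by
    simp only [einner_Rc_eq_tinner_deltaE hcs.1 (hdet _) (hsym _)]
    exact (hasDerivAt_tinner hG (hdet t₀) (hsym t₀) hH _ cs).const_mul 4⁻¹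
  have key := hvar.unique hmoment
  rw [einner_Rc_eq_tinner_deltaE hcs.1 (hdet t₀) (hsym t₀)] at key
  rw [tinner_comm _ _ (hsym t₀), tinner_deltaE_adjoint cs (hdet t₀) (hsym t₀) A B hB,
    tinner_comm (deltaE cs B) _ (hsym t₀), tinner_comm cs _ (hsym t₀)]
  linarith
end
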